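/- Analyticity for R(M_IPL): if Λ is a nonempty set of intuitionistic formulas closed under subformulas and ṽ ∈ iPLV'(Λ), then there exists an intuitionistic level valuation v ∈ L_IPL whose restriction to Λ coincides with ṽ. -/
import Mathlib


/-- Intuitionistic formulas over signature Ω = {¬, →, ∨, ∧}. -/
inductive IF
  | var : ℕ → IF
  | neg : IF → IF
  | imp : IF → IF → IF
  | dis : IF → IF → IF
  | con : IF → IF → IF
deriving DecidableEq

/-- The three intuitionistic truth values F, U, T. -/
inductive VI
  | F | U | T
deriving DecidableEq

def inegOp : VI → Set VI
  | .F => {.U, .T}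
  | .U => {.U, .T}
  | .T => {.F}

def iimpOp : VI → VI → Set VI
  | .T, .T => {.T}
  | .T, _ => {.F}
  | _, .T => {.T}
  | _, _ => {.U, .T}

def idisOp : VI → VI → Set VI
  | .T, _ => {.T}
  | _, .T => {.T}
  | _, _ => {.F}

def iconOp : VI → VI → Set VI
  | .T, .T => {.T}
  | _, _ => {.F}

/-- Valuations over the Nmatrix M_IPL. -/
def IsValI (v : IF → VI) : Prop :=
  (∀ α, v (.neg α) ∈ inegOp (v α)) ∧
  (∀ α β, v (.imp α β) ∈ iimpOp (v α) (v β)) ∧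
  (∀ α β, v (.dis α β) ∈ idisOp (v α) (v β)) ∧
  (∀ α β, v (.con α β) ∈ iconOp (v α) (v β))

/-- Val₊(M_IPL): valuations taking only values T, F on propositional variables. -/
def ValPlus : Set (IF → VI) :=
  {v | IsValI v ∧ ∀ n, v (.var n) = VI.T ∨ v (.var n) = VI.F}

/-- Complexity of an intuitionistic formula. -/
def co : IF → ℕ
  | .var _ => 0
  | .neg α => co α + 1
  | .imp α β => co α + co β + 1
  | .dis α β => co α + co β + 1
  | .con α β => co α + co β + 1

/-- The levels L_k for IPL. -/
def LevelI : ℕ → Set (IF → VI)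
  | 0 => ValPlus
  | (k+1) => {v ∈ LevelI k | ∀ α, co α ≤ k + 1 → v α = VI.U →
      ∃ w ∈ LevelI k, w α = VI.F ∧ ∀ β, v β = VI.T → w β = VI.T}

/-- Intuitionistic level valuations L_IPL = ⋂_{k ≥ 0} L_k. -/
def LIPL : Set (IF → VI) := ⋂ k, LevelI k

/-- The consequence relation Γ ⊢_IPL φ of the Hilbert calculus H_IPL. -/
inductive IDeriv (Γ : Set IF) : IF → Prop
  | prem {φ : IF} : φ ∈ Γ → IDeriv Γ φ
  | ax1 (α β : IF) : IDeriv Γ (α.imp (β.imp α))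
  | ax2 (α β γ : IF) : IDeriv Γ ((α.imp (β.imp γ)).imp ((α.imp β).imp (α.imp γ)))
  | ax3 (α β : IF) : IDeriv Γ (α.imp (β.imp (α.con β)))
  | ax4 (α β : IF) : IDeriv Γ ((α.con β).imp α)
  | ax5 (α β : IF) : IDeriv Γ ((α.con β).imp β)
  | ax6 (α β : IF) : IDeriv Γ (α.imp (α.dis β))
  | ax7 (α β : IF) : IDeriv Γ (β.imp (α.dis β))
  | ax8 (α β γ : IF) : IDeriv Γ ((α.imp γ).imp ((β.imp γ).imp ((α.dis β).imp γ)))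
  | ax9 (α β : IF) : IDeriv Γ ((β.imp α).imp ((β.imp α.neg).imp β.neg))
  | ax10 (α β : IF) : IDeriv Γ (α.imp (α.neg.imp β))
  | mp {α β : IF} : IDeriv Γ (α.imp β) → IDeriv Γ α → IDeriv Γ β

/-- Δ is φ-saturated (w.r.t. ⊢_IPL). -/
def ISat (Δ : Set IF) (φ : IF) : Prop :=
  ¬ IDeriv Δ φ ∧ ∀ α ∉ Δ, IDeriv (insert α Δ) φ

open Classical in
/-- The valuation v_Δ associated to a φ-saturated set Δ in IPL. -/
noncomputable def vDeltaI (Δ : Set IF) : IF → VI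
  | .var n => if IF.var n ∈ Δ then VI.T else VI.F
  | .neg α => if IF.neg α ∈ Δ then VI.T else if α ∈ Δ then VI.F else VI.U
  | .imp α β => if IF.imp α β ∈ Δ then VI.T else if α ∈ Δ then VI.F else VI.U
  | .con α β => if α ∈ Δ ∧ β ∈ Δ then VI.T else VI.F
  | .dis α β => if α ∈ Δ ∨ β ∈ Δ then VI.T else VI.F

/-- Λ is closed under (immediate, hence all) subformulas. -/
def SubClosedI (Λ : Set IF) : Prop :=
  (∀ α, IF.neg α ∈ Λ → α ∈ Λ) ∧
  (∀ α β, IF.imp α β ∈ Λ → α ∈ Λ ∧ β ∈ Λ) ∧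
  (∀ α β, IF.dis α β ∈ Λ → α ∈ Λ ∧ β ∈ Λ) ∧
  (∀ α β, IF.con α β ∈ Λ → α ∈ Λ ∧ β ∈ Λ)

/-- Intuitionistic partial valuations with domain Λ (modelled as total functions
constrained on Λ). -/
def IsPValI (Λ : Set IF) (v : IF → VI) : Prop :=
  (∀ n, IF.var n ∈ Λ → v (.var n) = VI.T ∨ v (.var n) = VI.F) ∧
  (∀ α, IF.neg α ∈ Λ → v (.neg α) ∈ inegOp (v α)) ∧
  (∀ α β, IF.imp α β ∈ Λ → v (.imp α β) ∈ iimpOp (v α) (v β)) ∧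
  (∀ α β, IF.dis α β ∈ Λ → v (.dis α β) ∈ idisOp (v α) (v β)) ∧
  (∀ α β, IF.con α β ∈ Λ → v (.con α β) ∈ iconOp (v α) (v β))

/-- iPLV'(Λ): intuitionistic partial' level valuations over Λ. -/
def iPLV' (Λ : Set IF) : Set (IF → VI) :=
  {v | IsPValI Λ v ∧ ∀ α ∈ Λ, v α = VI.U →
    ∃ w ∈ LIPL, w α = VI.F ∧ ∀ β ∈ Λ, v β = VI.T → w β = VI.T}

/-- iPLV(Λ): intuitionistic partial level valuations over Λ, defined as the largest
subset of iPV(Λ) whose condition is witnessed inside itself. -/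
def iPLV (Λ : Set IF) : Set (IF → VI) :=
  ⋃₀ {S | (∀ v ∈ S, IsPValI Λ v) ∧
      ∀ v ∈ S, ∀ α ∈ Λ, v α = VI.U →
        ∃ w ∈ S, w α = VI.F ∧ ∀ β ∈ Λ, v β = VI.T → w β = VI.T}

/-- Set of subformulas of an intuitionistic formula. -/
def IF.subf : IF → Finset IF
  | .var n => {.var n}
  | .neg α => insert (.neg α) α.subf
  | .imp α β => insert (.imp α β) (α.subf ∪ β.subf)
  | .dis α β => insert (.dis α β) (α.subf ∪ β.subf)
  | .con α β => insert (.con α β) (α.subf ∪ β.subf)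

/-- Γ ⊨_iPLV φ : consequence w.r.t. the intuitionistic truth tables, over the set Λ
of subformulas of Γ ∪ {φ}. -/
def iPLVConseq (Γ : Finset IF) (φ : IF) : Prop :=
  ∀ v ∈ iPLV (↑(Γ.biUnion IF.subf ∪ φ.subf) : Set IF),
    (∀ β ∈ Γ, v β = VI.T) → v φ = VI.T


/-! ### Auxiliary material for the analyticity theorem -/

lemma levelI_succ_subset (k : ℕ) : LevelI (k+1) ⊆ LevelI k := fun _ hv => hv.1

lemma levelI_le {k j : ℕ} (h : k ≤ j) : LevelI j ⊆ LevelI k := by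
  induction j with
  | zero => simp_all
  | succ n ih =>
    rcases Nat.lt_or_ge k (n+1) with h' | h'
    · exact fun v hv => ih (Nat.lt_succ_iff.mp h') (levelI_succ_subset n hv)
    · have : k = n + 1 := le_antisymm h h'
      subst this; exact fun v hv => hv

lemma lipl_mem_level {w : IF → VI} (hw : w ∈ LIPL) (k : ℕ) : w ∈ LevelI k :=
  Set.mem_iInter.mp hw k

/-- The set of "semantic Λ-consequences" of the T-part of vp. -/
def DStar (Λ : Set IF) (vp : IF → VI) : Set IF :=
  {γ | ∀ w ∈ LIPL, (∀ β ∈ Λ, vp β = VI.T → w β = VI.T) → w γ = VI.T}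

open Classical in
/-- The canonical extension of vp to a total valuation. -/
noncomputable def extv (Λ : Set IF) (vp : IF → VI) : IF → VI
  | .var n => if IF.var n ∈ Λ then vp (.var n) else VI.F
  | .neg α => if IF.neg α ∈ Λ then vp (.neg α) else
      if extv Λ vp α = VI.T then VI.F
      else if IF.neg α ∈ DStar Λ vp then VI.T else VI.U
  | .imp α β => if IF.imp α β ∈ Λ then vp (.imp α β) else
      if extv Λ vp β = VI.T then VI.T
      else if extv Λ vp α = VI.T then VI.F
      else if IF.imp α β ∈ DStar Λ vp then VI.T else VI.U
  | .dis α β => if IF.dis α β ∈ Λ then vp (.dis α β) else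
      if extv Λ vp α = VI.T ∨ extv Λ vp β = VI.T then VI.T else VI.F
  | .con α β => if IF.con α β ∈ Λ then vp (.con α β) else
      if extv Λ vp α = VI.T ∧ extv Λ vp β = VI.T then VI.T else VI.F

lemma extv_eq_of_mem (Λ : Set IF) (vp : IF → VI) {γ : IF} (h : γ ∈ Λ) :
    extv Λ vp γ = vp γ := by
  cases γ <;> simp [extv, h]

/-- Domination: every level valuation modelling the T-part of vp on Λ dominates
the T-values of the canonical extension. -/
lemma extv_dominated (Λ : Set IF) (vp : IF → VI) :
    ∀ γ, ∀ w ∈ LIPL, (∀ β ∈ Λ, vp β = VI.T → w β = VI.T) →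
      extv Λ vp γ = VI.T → w γ = VI.T := by
  intro γ
  induction γ with
  | var n =>
    intro w hw hmod hT
    by_cases h : IF.var n ∈ Λ
    · exact hmod _ h (by rwa [extv_eq_of_mem Λ vp h] at hT)
    · simp [extv, h] at hT
  | neg α ih =>
    intro w hw hmod hT
    by_cases h : IF.neg α ∈ Λ
    · exact hmod _ h (by rwa [extv_eq_of_mem Λ vp h] at hT)
    · simp only [extv, h, if_false] at hT
      split_ifs at hT with h1 h2
      · exact h2 w hw hmod
  | imp α β iha ihb =>
    intro w hw hmod hT
    by_cases h : IF.imp α β ∈ Λ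
    · exact hmod _ h (by rwa [extv_eq_of_mem Λ vp h] at hT)
    · have hval : IsValI w := (lipl_mem_level hw 0).1
      simp only [extv, h, if_false] at hT
      split_ifs at hT with h1 h2 h3
      · have hb : w β = VI.T := ihb w hw hmod h1
        have := hval.2.1 α β
        rw [hb] at this
        cases hwa : w α <;> rw [hwa] at this <;> simpa [iimpOp] using this
      · exact h3 w hw hmod
  | dis α β iha ihb =>
    intro w hw hmod hT
    by_cases h : IF.dis α β ∈ Λ
    · exact hmod _ h (by rwa [extv_eq_of_mem Λ vp h] at hT)
    · have hval : IsValI w := (lipl_mem_level hw 0).1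
      simp only [extv, h, if_false] at hT
      split_ifs at hT with h1
      have := hval.2.2.1 α β
      rcases h1 with h1 | h1
      · have ha : w α = VI.T := iha w hw hmod h1
        rw [ha] at this
        simpa [idisOp] using this
      · have hb : w β = VI.T := ihb w hw hmod h1
        rw [hb] at this
        cases hwa : w α <;> rw [hwa] at this <;> simpa [idisOp] using this
  | con α β iha ihb =>
    intro w hw hmod hT
    by_cases h : IF.con α β ∈ Λ
    · exact hmod _ h (by rwa [extv_eq_of_mem Λ vp h] at hT)
    · have hval : IsValI w := (lipl_mem_level hw 0).1
      simp only [extv, h, if_false] at hT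
      split_ifs at hT with h1
      have := hval.2.2.2 α β
      rw [iha w hw hmod h1.1, ihb w hw hmod h1.2] at this
      simpa [iconOp] using this

/-- Witness lemma for U-values of the canonical extension. -/
lemma extv_uwitness (Λ : Set IF) (vp : IF → VI) (hvp : vp ∈ iPLV' Λ) :
    ∀ μ k, extv Λ vp μ = VI.U →
      ∃ w ∈ LevelI k, w μ = VI.F ∧ ∀ β, extv Λ vp β = VI.T → w β = VI.T := by
  intro μ k hU
  by_cases hμ : μ ∈ Λ
  · rw [extv_eq_of_mem Λ vp hμ] at hU
    obtain ⟨w, hwL, hwF, hwT⟩ := hvp.2 μ hμ hU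
    exact ⟨w, lipl_mem_level hwL k, hwF,
      fun β hβ => extv_dominated Λ vp β w hwL hwT hβ⟩
  · -- μ is not in Λ; only neg and imp can yield U, from the DStar branch
    have key : μ ∉ DStar Λ vp := by
      cases μ with
      | var n => simp [extv, hμ] at hU
      | neg α =>
        intro hd
        simp only [extv, hμ, if_false] at hU
        split_ifs at hU
      | imp α β =>
        intro hd
        simp only [extv, hμ, if_false] at hU
        split_ifs at hU
      | dis α β =>
        simp only [extv, hμ, if_false] at hU
        split_ifs at hU
      | con α β =>
        simp only [extv, hμ, if_false] at hU
        split_ifs at hU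
    simp only [DStar, Set.mem_setOf_eq, not_forall] at key
    obtain ⟨w, hwL, hmod, hwne⟩ := key
    have hdom : ∀ β, extv Λ vp β = VI.T → w β = VI.T :=
      fun β hβ => extv_dominated Λ vp β w hwL hmod hβ
    cases hwμ : w μ with
    | T => exact absurd hwμ hwne
    | F => exact ⟨w, lipl_mem_level hwL k, hwμ, hdom⟩
    | U =>
      set j := max k (co μ) with hj
      have hwj : w ∈ LevelI (j + 1) := lipl_mem_level hwL (j + 1)
      obtain ⟨w', hw'j, hw'F, hw'T⟩ :=
        hwj.2 μ (le_trans (le_max_right k (co μ)) (Nat.le_succ_of_le (le_refl j)) |>.trans (le_refl _) |> fun _ => Nat.le_succ_of_le (le_max_right k (co μ))) hwμ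
      exact ⟨w', levelI_le (le_max_left k (co μ)) hw'j, hw'F,
        fun β hβ => hw'T β (hdom β hβ)⟩

lemma extv_valplus (Λ : Set IF) (hcl : SubClosedI Λ) (vp : IF → VI)
    (hvp1 : IsPValI Λ vp) : extv Λ vp ∈ ValPlus := by
  refine ⟨⟨?_, ?_, ?_, ?_⟩, ?_⟩
  · intro α
    by_cases h : IF.neg α ∈ Λ
    · rw [extv_eq_of_mem Λ vp h, extv_eq_of_mem Λ vp (hcl.1 α h)]
      exact hvp1.2.1 α h
    · simp only [extv, h, if_false]
      split_ifs with h1 h2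
      · rw [h1]; simp [inegOp]
      · cases hα : extv Λ vp α <;> simp_all [inegOp]
      · cases hα : extv Λ vp α <;> simp_all [inegOp]
  · intro α β
    by_cases h : IF.imp α β ∈ Λ
    · rw [extv_eq_of_mem Λ vp h, extv_eq_of_mem Λ vp (hcl.2.1 α β h).1,
        extv_eq_of_mem Λ vp (hcl.2.1 α β h).2]
      exact hvp1.2.2.1 α β h
    · simp only [extv, h, if_false]
      split_ifs with h1 h2 h3
      · rw [h1]; cases hα : extv Λ vp α <;> simp [iimpOp]
      · rw [h2]; cases hβ : extv Λ vp β <;> simp_all [iimpOp]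
      · cases hα : extv Λ vp α <;> cases hβ : extv Λ vp β <;> simp_all [iimpOp]
      · cases hα : extv Λ vp α <;> cases hβ : extv Λ vp β <;> simp_all [iimpOp]
  · intro α β
    by_cases h : IF.dis α β ∈ Λ
    · rw [extv_eq_of_mem Λ vp h, extv_eq_of_mem Λ vp (hcl.2.2.1 α β h).1,
        extv_eq_of_mem Λ vp (hcl.2.2.1 α β h).2]
      exact hvp1.2.2.2.1 α β h
    · simp only [extv, h, if_false]
      split_ifs with h1
      · rcases h1 with h1 | h1
        · rw [h1]; simp [idisOp]
        · rw [h1]; cases hα : extv Λ vp α <;> simp [idisOp]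
      · push_neg at h1
        cases hα : extv Λ vp α <;> cases hβ : extv Λ vp β <;> simp_all [idisOp]
  · intro α β
    by_cases h : IF.con α β ∈ Λ
    · rw [extv_eq_of_mem Λ vp h, extv_eq_of_mem Λ vp (hcl.2.2.2 α β h).1,
        extv_eq_of_mem Λ vp (hcl.2.2.2 α β h).2]
      exact hvp1.2.2.2.2 α β h
    · simp only [extv, h, if_false]
      split_ifs with h1
      · rw [h1.1, h1.2]; simp [iconOp]
      · push_neg at h1
        cases hα : extv Λ vp α <;> cases hβ : extv Λ vp β <;> simp_all [iconOp]
  · intro n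
    by_cases h : IF.var n ∈ Λ
    · rw [extv_eq_of_mem Λ vp h]; exact hvp1.1 n h
    · right; simp [extv, h]

lemma extv_mem_level (Λ : Set IF) (hcl : SubClosedI Λ) (vp : IF → VI)
    (hvp : vp ∈ iPLV' Λ) : ∀ k, extv Λ vp ∈ LevelI k := by
  intro k
  induction k with
  | zero => exact extv_valplus Λ hcl vp hvp.1
  | succ n ih =>
    refine ⟨ih, fun α _ hU => ?_⟩
    exact extv_uwitness Λ vp hvp α n hU

/-- Analyticity for R(M_IPL): every member of iPLV'(Λ) extends to an
intuitionistic level valuation. -/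
theorem ipl_analyticity (Λ : Set IF) (hne : Λ.Nonempty) (hcl : SubClosedI Λ)
    (vp : IF → VI) (hvp : vp ∈ iPLV' Λ) :
    ∃ v ∈ LIPL, ∀ α ∈ Λ, v α = vp α := by
  refine ⟨extv Λ vp, Set.mem_iInter.mpr (extv_mem_level Λ hcl vp hvp), ?_⟩
  exact fun α hα => extv_eq_of_mem Λ vp hα
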